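/- arXiv:2003.13372 — 5 statements merged into one kernel-verified Lean document; each statement's English description precedes it below -/
import Mathlib

section
/- Let ℓ_r(x) for 0 ≤ r ≤ n be a family of polynomials, each ℓ_r symmetric of center r/2 (i.e., x^r · ℓ_r(1/x) = ℓ_r(x)). Define p_{n,k}(x) = ∑_{r=0}^{n} ℓ_r(x) · ∑_{i=0}^{r} C(n-k,i)·C(k,r-i)·x^{k-r+i} for 0 ≤ k ≤ n. Then x^n · p_{n,n-k}(1/x) = p_{n,k}(x) for all 0 ≤ k ≤ n. -/
/-!
With `a = n - k` and `b = k`, the inner sum defining `p_{n,k}` is the coefficient of `y ^ r`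
in `(1 + y) ^ a (x + y) ^ b`, a polynomial of degree `≤ a + b - r` in `x`. Reflecting it at that
degree exchanges the roles of `a` and `b`, and since `ℓ_r` is its own reflection at degree `r`,
reflection at degree `n = r + (n - r)` is multiplicative on each summand `ℓ_r · (…)`.
-/

open Polynomial Finset

namespace Polynomial

variable {R : Type*} [Semiring R]

theorem reflect_sum {ι : Type*} (s : Finset ι) (f : ι → R[X]) (N : ℕ) :
    reflect N (∑ i ∈ s, f i) = ∑ i ∈ s, reflect N (f i) := by
  classical
  induction s using Finset.induction_on with
  | empty => simp
  | insert a s ha ih => rw [sum_insert ha, sum_insert ha, reflect_add, ih]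

variable (R) in
/-- The coefficient of `y ^ r` in `(1 + y) ^ a (X + y) ^ b`. -/
noncomputable def binomKernel (a b r : ℕ) : R[X] :=
  ∑ x ∈ antidiagonal r, C ((a.choose x.1 * b.choose x.2 : ℕ) : R) * X ^ (b - x.2)

theorem binomKernel_eq_sum_range (a b r : ℕ) :
    binomKernel R a b r =
      ∑ i ∈ range (r + 1), ((a.choose i : R[X]) * (b.choose (r - i) : R[X])) * X ^ (b + i - r) := by
  rw [binomKernel, Nat.sum_antidiagonal_eq_sum_range_succ
    (fun i j => C ((a.choose i * b.choose j : ℕ) : R) * X ^ (b - j))]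
  refine sum_congr rfl fun i hi => ?_
  have hi : i ≤ r := Nat.lt_succ_iff.mp (mem_range.mp hi)
  rw [C_eq_natCast, Nat.cast_mul, show b - (r - i) = b + i - r by omega]

theorem natDegree_binomKernel_le (a b r : ℕ) : (binomKernel R a b r).natDegree ≤ a + b - r := by
  refine natDegree_sum_le_of_forall_le _ _ fun x hx => ?_
  rw [HasAntidiagonal.mem_antidiagonal] at hx
  by_cases hxa : x.1 ≤ a
  · exact (natDegree_C_mul_X_pow_le _ _).trans (by omega)
  · simp [Nat.choose_eq_zero_of_lt (not_le.mp hxa)]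

theorem reflect_binomKernel (a b r : ℕ) :
    (binomKernel R b a r).reflect (b + a - r) = binomKernel R a b r := by
  rw [binomKernel, reflect_sum, binomKernel, ← Nat.sum_antidiagonal_swap]
  refine sum_congr rfl fun x hx => ?_
  rw [HasAntidiagonal.mem_antidiagonal] at hx
  rw [reflect_C_mul_X_pow, Prod.fst_swap, Prod.snd_swap, mul_comm (b.choose x.2)]
  by_cases hxa : x.1 ≤ a
  · by_cases hxb : x.2 ≤ b
    · rw [revAt_le (by omega), show b + a - r - (a - x.1) = b - x.2 by omega]
    · simp [Nat.choose_eq_zero_of_lt (not_le.mp hxb)]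
  · simp [Nat.choose_eq_zero_of_lt (not_le.mp hxa)]

end Polynomial

/-- Symmetry `x^n p_{n,n-k}(1/x) = p_{n,k}(x)` of the polynomials `p_{n,k}`,
expressed via `Polynomial.reflect`. -/
theorem stmt_1 (n : ℕ) (ℓ : ℕ → ℝ[X])
    (hdeg : ∀ r ≤ n, (ℓ r).natDegree ≤ r)
    (hsym : ∀ r ≤ n, (ℓ r).reflect r = ℓ r)
    (p : ℕ → ℝ[X])
    (hp : ∀ k ≤ n, p k = ∑ r ∈ range (n + 1), ℓ r *
        ∑ i ∈ range (r + 1),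
          (Nat.choose (n - k) i * Nat.choose k (r - i) : ℝ[X]) * X ^ (k + i - r))
    (k : ℕ) (hk : k ≤ n) :
    (p (n - k)).reflect n = p k := by
  simp only [hp k hk, hp (n - k) (Nat.sub_le n k), Nat.sub_sub_self hk,
    ← binomKernel_eq_sum_range, reflect_sum]
  refine sum_congr rfl fun r hr => ?_
  have hr : r ≤ n := Nat.lt_succ_iff.mp (mem_range.mp hr)
  have hsplit : r + (k + (n - k) - r) = n := by omega
  have hmul := reflect_mul _ _ (hdeg r hr) (natDegree_binomKernel_le k (n - k) r)
  rw [hsplit, hsym r hr] at hmul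
  rw [hmul, reflect_binomKernel]
end

section
/- Let p_{n,k}(x) for 0 ≤ k ≤ n ≤ d be polynomials satisfying the recurrence p_{n,k}(x) = p_{n,k-1}(x) + (x-1)·p_{n-1,k-1}(x) for 1 ≤ k ≤ n. Assume additionally that ∑_{k=0}^{n} p_{n,k}(x) = H(n)(x) for some polynomials H(n), and set p_{n-1,n}(x) := p_{n,0}(x) − H(n-1)(x), so that p_{n-1,n}(x) = p_{n,0}(x) − ∑_{i=0}^{n-1} p_{n-1,i}(x). Then for all 0 ≤ k ≤ n: p_{n,k}(x) = x·∑_{i=0}^{k-1} p_{n-1,i}(x) + ∑_{i=k}^{n} p_{n-1,i}(x). -/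
open Polynomial Finset

/-- The long-form recurrence `p_{n,k} = x ∑_{i<k} p_{n-1,i} + ∑_{i=k}^n p_{n-1,i}`,
where `p_{n-1,n} := p_{n,0} - ∑_{i<n} p_{n-1,i}`. -/
theorem stmt_8 (n : ℕ) (hn : 1 ≤ n) (p : ℕ → ℕ → ℝ[X])
    (hrec : ∀ k, 1 ≤ k → k ≤ n → p n k = p n (k - 1) + (X - 1) * p (n - 1) (k - 1))
    (P : ℕ → ℝ[X])
    (hP : ∀ i < n, P i = p (n - 1) i)
    (hPn : P n = p n 0 - ∑ i ∈ range n, p (n - 1) i) :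
    ∀ k ≤ n, p n k = X * ∑ i ∈ range k, P i + ∑ i ∈ Icc k n, P i := by
  intro k
  induction k with
  | zero =>
    intro _
    have h1 : Icc 0 n = range (n + 1) := by
      ext i; simp [Nat.lt_succ_iff]
    have h2 : ∑ i ∈ range n, P i = ∑ i ∈ range n, p (n - 1) i :=
      Finset.sum_congr rfl fun i hi => hP i (mem_range.mp hi)
    rw [h1, Finset.sum_range_succ, h2, hPn]
    simp
  | succ k ih =>
    intro hk
    have hk' : k ≤ n := Nat.le_of_succ_le hk
    have hkn : k < n := hk
    have hrk := hrec (k + 1) (Nat.succ_le_succ (Nat.zero_le k)) hk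
    simp only [Nat.add_sub_cancel] at hrk
    have hIcc : Icc k n = insert k (Icc (k + 1) n) := by
      rw [Finset.Icc_add_one_left_eq_Ioc, Finset.Ioc_insert_left hk']
    have hknotmem : k ∉ Icc (k + 1) n := by simp
    have := ih hk'
    rw [hIcc, Finset.sum_insert hknotmem] at this
    rw [hrk, this, Finset.sum_range_succ, hP k hkn]
    ring
end

section
/- For polynomials over ℝ, define for g(x) ∈ ℝ[x] and r ≥ 1 the r-section g^{⟨r,i⟩} by g(x) = ∑_{i=0}^{r-1} x^i · g^{⟨r,i⟩}(x^r). Let c_{n,r}(x) = (1 + x + ... + x^{r-1})^n. Then for r ≥ m ≥ 1: (c_{m,r}(x))^{⟨r,0⟩} − (c_{m-1,r}(x)·(1 + x + ... + x^{m-1}))^{⟨r,0⟩} = ∑_{i=m}^{r-1} x · (c_{m-1,r}(x))^{⟨r,r-i⟩}. -/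
/-! Both sides are linear in the polynomial being sectioned. Writing
`1 + ⋯ + x^{r-1} = (1 + ⋯ + x^{m-1}) + ∑_{i=m}^{r-1} x^i`, the left-hand side is the `0`-th
section of `c_{m-1,r}(x) · ∑_{i=m}^{r-1} x^i`, and for `0 < i ≤ r` the `0`-th section of
`g(x) x^i` is `x · g^{⟨r,r-i⟩}`: the exponent `r j` of `g x^i` comes from the exponent
`r (j - 1) + (r - i)` of `g`. -/

open Polynomial Finset

/-- The `i`-th `r`-section `g^{⟨r,i⟩}` of a real polynomial `g`, defined by
`g(x) = ∑_{i=0}^{r-1} x^i g^{⟨r,i⟩}(x^r)`. -/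
noncomputable def rsection (r i : ℕ) (g : ℝ[X]) : ℝ[X] :=
  ∑ j ∈ Finset.range (g.natDegree + 1), Polynomial.C (g.coeff (r * j + i)) * X ^ j

section rsection

variable {r : ℕ}

lemma coeff_rsection (hr : 0 < r) (i : ℕ) (g : ℝ[X]) (j : ℕ) :
    (rsection r i g).coeff j = g.coeff (r * j + i) := by
  simp only [rsection, finsetSum_coeff, coeff_C_mul_X_pow]
  rw [Finset.sum_eq_single j fun b _ hb => by rw [if_neg hb.symm]]
  · simp
  · intro hj
    rw [Finset.mem_range, not_lt] at hj
    rw [if_pos rfl, coeff_eq_zero_of_natDegree_lt (by nlinarith)]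

lemma rsection_add (hr : 0 < r) (i : ℕ) (f g : ℝ[X]) :
    rsection r i (f + g) = rsection r i f + rsection r i g := by
  ext j
  simp only [coeff_rsection hr, coeff_add]

lemma rsection_sum (hr : 0 < r) (i : ℕ) {ι : Type*} (s : Finset ι) (f : ι → ℝ[X]) :
    rsection r i (∑ k ∈ s, f k) = ∑ k ∈ s, rsection r i (f k) := by
  ext j
  simp only [coeff_rsection hr, finsetSum_coeff]

lemma rsection_zero_mul_X_pow {i : ℕ} (hi : 0 < i) (hir : i ≤ r) (g : ℝ[X]) :
    rsection r 0 (g * X ^ i) = X * rsection r (r - i) g := by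
  have hr : 0 < r := hi.trans_le hir
  ext j
  rw [coeff_rsection hr, add_zero, coeff_mul_X_pow']
  rcases j with _ | j
  · simp [hi.ne']
  · rw [if_pos (by nlinarith), coeff_X_mul, coeff_rsection hr]
    congr 1
    rw [mul_add_one, Nat.add_sub_assoc hir]

end rsection

/-- The section identity from Example 7.2 of the paper, where
`c_{m,r}(x) = (1 + x + ⋯ + x^{r-1})^m`. -/
theorem stmt_12 (r m : ℕ) (hm : 1 ≤ m) (hmr : m ≤ r) :
    rsection r 0 ((∑ i ∈ range r, (X : ℝ[X]) ^ i) ^ m)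
      - rsection r 0 ((∑ i ∈ range r, (X : ℝ[X]) ^ i) ^ (m - 1) * ∑ i ∈ range m, X ^ i)
      = ∑ i ∈ Icc m (r - 1), X * rsection r (r - i) ((∑ i ∈ range r, (X : ℝ[X]) ^ i) ^ (m - 1)) := by
  have hr : 0 < r := hm.trans hmr
  set c : ℝ[X] := (∑ i ∈ range r, (X : ℝ[X]) ^ i) ^ (m - 1)
  have hIcc : Icc m (r - 1) = Ico m r :=
    Finset.Icc_sub_one_right_eq_Ico_of_not_isMin (by simpa using hr.ne') m
  have hsplit : (∑ i ∈ range r, (X : ℝ[X]) ^ i) ^ m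
      = c * ∑ i ∈ range m, X ^ i + ∑ i ∈ Icc m (r - 1), c * X ^ i := by
    rw [← mul_sum, ← mul_add, hIcc, sum_range_add_sum_Ico _ hmr, ← pow_succ,
      Nat.sub_add_cancel hm]
  rw [hsplit, rsection_add hr, add_sub_cancel_left, rsection_sum hr]
  refine sum_congr rfl fun i hi => ?_
  rw [hIcc, mem_Ico] at hi
  exact rsection_zero_mul_X_pow (by omega) (by omega) c
end

section
/- Every real polynomial g(x) of degree at most n can be written uniquely as g(x) = a(x) + x·b(x), where a(x) has degree at most n and satisfies x^n·a(1/x) = a(x), and b(x) has degree at most n−1 and satisfies x^{n-1}·b(1/x) = b(x). -/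
/-!
Write `g^R` for the reflection of `g` in degree `n`. Reflecting `g = a + X b` in degree `n` fixes
`a` and sends `X b` to `b`, so `g - g^R = (X - 1) b`. Since `g` and `g^R` agree at `1`, `X - 1`
divides `g - g^R`; thus `b` must be the quotient and `a = g - X b`, and conversely the reflection
of `(X - 1) b = g - g^R` shows that this `b` is symmetric. For `n = 0` the truncated `n - 1` is
`0`, so `b` is merely a constant, forced to vanish by the coefficient of `X`.
-/

open Polynomial Finset

namespace Polynomial

section Semiring

variable {R : Type*} [Semiring R]

theorem reflect_X_mul {p : R[X]} {m : ℕ} (hp : p.natDegree ≤ m) :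
    (X * p).reflect (m + 1) = p.reflect m := by
  rw [add_comm, reflect_mul X p natDegree_X_le hp, reflect_one_X, one_mul]

end Semiring

section CommSemiring

variable {R : Type*} [CommSemiring R]

theorem eval_one_reflect {p : R[X]} {N : ℕ} (hp : p.natDegree ≤ N) :
    (p.reflect N).eval 1 = p.eval 1 := by
  let _ : Invertible (1 : R) := invertibleOne
  simpa using eval₂_reflect_mul_pow (RingHom.id R) 1 N p hp

end CommSemiring

variable {R : Type*} [CommRing R]

theorem isLeftRegular_X_sub_one : IsLeftRegular (X - 1 : R[X]) := by
  simpa using (monic_X_sub_C (1 : R)).isRegular.left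

theorem reflect_X_sub_one_mul {p : R[X]} {m : ℕ} (hp : p.natDegree ≤ m) :
    ((X - 1) * p).reflect (m + 1) = -((X - 1) * p.reflect m) := by
  have hX : (X - 1 : R[X]).natDegree ≤ 1 := by simpa using natDegree_X_sub_C_le (1 : R)
  rw [add_comm, reflect_mul _ _ hX hp, reflect_sub, reflect_one, reflect_one_X, pow_one]
  ring

theorem reflect_sub_X_mul_eq_self_iff {g b : R[X]} {m : ℕ} (hb : b.natDegree ≤ m)
    (hb_symm : b.reflect m = b) :
    (g - X * b).reflect (m + 1) = g - X * b ↔ (X - 1) * b = g - g.reflect (m + 1) := by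
  rw [reflect_sub, reflect_X_mul hb, hb_symm]
  constructor <;> intro h <;> linear_combination h

theorem reflect_eq_self_of_X_sub_one_mul_eq {g b : R[X]} {m : ℕ} (hb : b.natDegree ≤ m)
    (h : (X - 1) * b = g - g.reflect (m + 1)) : b.reflect m = b := by
  have h_refl := congrArg (reflect (m + 1)) h
  rw [reflect_X_sub_one_mul hb, reflect_sub, reflect_reflect] at h_refl
  exact isLeftRegular_X_sub_one (by linear_combination -h_refl - h)

theorem existsUnique_add_X_mul_reflect_eq_self {g : R[X]} {m : ℕ} (hg : g.natDegree ≤ m + 1) :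
    ∃! ab : R[X] × R[X],
      ab.1.natDegree ≤ m + 1 ∧ ab.1.reflect (m + 1) = ab.1 ∧
      ab.2.natDegree ≤ m ∧ ab.2.reflect m = ab.2 ∧ g = ab.1 + X * ab.2 := by
  set f := g - g.reflect (m + 1)
  have hf : (X - 1) * (f /ₘ (X - 1)) = f := by
    have hroot : f.IsRoot 1 := by simp [f, eval_one_reflect hg]
    simpa using mul_divByMonic_eq_iff_isRoot.mpr hroot
  have hf_deg : f.natDegree ≤ m + 1 :=
    (natDegree_sub_le _ _).trans (max_le hg (natDegree_reflect_le.trans (max_le le_rfl hg)))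
  set b := f /ₘ (X - 1)
  have hb_deg : b.natDegree ≤ m := by
    nontriviality R
    have hX : (X - 1 : R[X]).natDegree = 1 := by simpa using natDegree_X_sub_C (1 : R)
    have hmonic : (X - 1 : R[X]).Monic := by simpa using monic_X_sub_C (1 : R)
    rw [natDegree_divByMonic _ hmonic, hX]
    omega
  have hb_symm := reflect_eq_self_of_X_sub_one_mul_eq hb_deg hf
  refine ⟨(g - X * b, b), ⟨?_, (reflect_sub_X_mul_eq_self_iff hb_deg hb_symm).mpr hf, hb_deg,
    hb_symm, by ring⟩, ?_⟩
  · have hXb : (X * b).natDegree ≤ m + 1 :=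
      (natDegree_mul_le.trans (add_le_add natDegree_X_le hb_deg)).trans_eq (add_comm 1 m)
    exact (natDegree_sub_le _ _).trans (max_le hg hXb)
  rintro ⟨a', b'⟩ ⟨-, ha'_symm, hb'_deg, hb'_symm, hg'⟩
  obtain rfl : a' = g - X * b' := by rw [hg']; ring
  have hb' : (X - 1) * b' = f := (reflect_sub_X_mul_eq_self_iff hb'_deg hb'_symm).mp ha'_symm
  obtain rfl : b' = b := isLeftRegular_X_sub_one (hb'.trans hf.symm)
  simp

theorem existsUnique_add_X_mul_of_natDegree_le_zero {g : R[X]} (hg : g.natDegree ≤ 0) :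
    ∃! ab : R[X] × R[X],
      ab.1.natDegree ≤ 0 ∧ ab.1.reflect 0 = ab.1 ∧
      ab.2.natDegree ≤ 0 ∧ ab.2.reflect 0 = ab.2 ∧ g = ab.1 + X * ab.2 := by
  refine ⟨(g, 0), ⟨hg, ?_, by simp, by simp, by simp⟩, ?_⟩
  · rw [eq_C_of_natDegree_le_zero hg, reflect_C, pow_zero, mul_one]
  rintro ⟨a, b⟩ ⟨ha, -, hb, -, hg'⟩
  dsimp only at ha hb hg'
  have hcoeff := congrArg (coeff · 1) hg'
  simp only [coeff_add, coeff_X_mul, coeff_eq_zero_of_natDegree_lt (hg.trans_lt one_pos),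
    coeff_eq_zero_of_natDegree_lt (ha.trans_lt one_pos), zero_add] at hcoeff
  obtain rfl : b = 0 := by rw [eq_C_of_natDegree_le_zero hb, ← hcoeff, C_0]
  simp [hg']

end Polynomial

/-- Unique symmetric decomposition `g = a + x b` of a polynomial of degree at most `n`,
with `a` symmetric with center `n/2` and `b` symmetric with center `(n-1)/2`. -/
theorem stmt_13 (n : ℕ) (g : ℝ[X]) (hg : g.natDegree ≤ n) :
    ∃! ab : ℝ[X] × ℝ[X],
      ab.1.natDegree ≤ n ∧ ab.1.reflect n = ab.1 ∧
      ab.2.natDegree ≤ n - 1 ∧ ab.2.reflect (n - 1) = ab.2 ∧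
      g = ab.1 + X * ab.2 := by
  cases n with
  | zero => exact existsUnique_add_X_mul_of_natDegree_le_zero hg
  | succ m => exact existsUnique_add_X_mul_reflect_eq_self hg
end

section
/- Let r ≥ 1 and n ≥ 1, and let q(n,k,j) denote the number of r-colored permutations w = (τ,ε) ∈ ℤ_r ≀ S_{n+1} whose first coordinate has color 0, which have exactly j descents, and whose last coordinate has color 0 and value n+1−k. Then q(n,k,j) − q(n−1,k−1,j−1) = q(n,k−1,j) − q(n−1,k−1,j) for all 1 ≤ k ≤ n and 0 ≤ j ≤ n; equivalently q satisfies the recurrence q(n,k,j) = q(n,k−1,j) + q(n−1,k−1,j−1) − q(n−1,k−1,j). -/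
/-!
Let `u = n + 1 - k` and `v = u + 1`, and call a colored permutation ending in one of these
values *linked* if its penultimate entry is the other one, with color `0`. Exchanging the values
`u` and `v` maps the permutations ending in `u` bijectively onto those ending in `v`; it changes
no descent except at the penultimate position, which stops being a descent exactly for linked
permutations. Linked permutations ending in `v` correspond, by deleting the last entry and
standardizing, to the permutations of size one less ending in `u`. So
`q(n,k,j) = N + q(n-1,k-1,j-1)` and `q(n,k-1,j) = N + q(n-1,k-1,j)`, where `N` counts the
unlinked ones.
-/

open Finset

/-- The number of descents of an `r`-colored permutation `w = (τ, ε)` of `{1, …, n+1}`,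
with the conventions `τ(n+2) := n+2` and `ε_{n+2} := 0` for the sentinel position. -/
def coloredDescents {n r : ℕ} (τ : Equiv.Perm (Fin (n + 1))) (ε : Fin (n + 1) → Fin r) : ℕ :=
  (Finset.univ.filter (fun i : Fin n =>
      (ε i.succ).val < (ε i.castSucc).val ∨
        ((ε i.castSucc).val = (ε i.succ).val ∧ τ i.succ < τ i.castSucc))).card
    + (if (ε (Fin.last n)).val ≠ 0 then 1 else 0)

/-- `q r n k j` is the number of `r`-colored permutations `w ∈ ℤ_r ≀ S_{n+1}` whose first
coordinate has color `0`, which have exactly `j` descents, and whose last coordinate has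
color `0` and value `n+1-k` (in `0`-based terms, value `n-k` in `Fin (n+1)`). -/
def q (r n k j : ℕ) : ℕ :=
  (Finset.univ.filter
      (fun w : Equiv.Perm (Fin (n + 1)) × (Fin (n + 1) → Fin r) =>
        (w.2 0).val = 0 ∧ coloredDescents w.1 w.2 = j ∧
          (w.2 (Fin.last n)).val = 0 ∧ (w.1 (Fin.last n)).val = n - k)).card

open Equiv

variable {r : ℕ}

def descentIndicator {n : ℕ} (τ : Perm (Fin (n + 1))) (ε : Fin (n + 1) → Fin r) (i : Fin n) :
    ℕ :=
  if (ε i.succ).val < (ε i.castSucc).val ∨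
      ((ε i.castSucc).val = (ε i.succ).val ∧ τ i.succ < τ i.castSucc) then 1 else 0

lemma coloredDescents_eq_sum {n : ℕ} (τ : Perm (Fin (n + 1))) (ε : Fin (n + 1) → Fin r) :
    coloredDescents τ ε = (∑ i, descentIndicator τ ε i)
      + (if (ε (Fin.last n)).val ≠ 0 then 1 else 0) := by
  rw [coloredDescents, card_filter]
  rfl

lemma swap_castSucc_succ_lt_iff {n : ℕ} {a : Fin n} {x y : Fin (n + 1)}
    (hx : x ≠ a.castSucc) (hy : y ≠ a.castSucc) :
    swap a.castSucc a.succ x < swap a.castSucc a.succ y ↔ x < y := by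
  rw [Ne, Fin.ext_iff, Fin.val_castSucc] at hx hy
  simp only [swap_apply_def]
  split_ifs <;> simp only [Fin.lt_def, Fin.ext_iff, Fin.val_castSucc, Fin.val_succ] at * <;> omega

variable {m : ℕ}

/-- Exchanging the adjacent values `a` and `a + 1`, when `a` sits at the last position, only
affects the comparison between the last two positions. -/
lemma coloredDescents_swap_mul (a : Fin (m + 1)) (τ : Perm (Fin (m + 2)))
    (ε : Fin (m + 2) → Fin r) (hτ : τ (Fin.last (m + 1)) = a.castSucc) :
    coloredDescents τ ε = coloredDescents (swap a.castSucc a.succ * τ) ε +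
      if τ (Fin.last m).castSucc = a.succ ∧ ε (Fin.last m).castSucc = ε (Fin.last (m + 1))
      then 1 else 0 := by
  have h_ne : ∀ i, i ≠ Fin.last (m + 1) → τ i ≠ a.castSucc := fun i hi h =>
    hi (τ.injective (h.trans hτ.symm))
  have h_middle : ∀ i : Fin m, descentIndicator (swap a.castSucc a.succ * τ) ε i.castSucc =
      descentIndicator τ ε i.castSucc := fun i => by
    simp only [descentIndicator, Perm.mul_apply, swap_castSucc_succ_lt_iff
      (h_ne i.castSucc.succ (by rw [Fin.succ_castSucc]; exact (Fin.castSucc_lt_last _).ne))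
      (h_ne i.castSucc.castSucc (Fin.castSucc_lt_last _).ne)]
  suffices h_last : descentIndicator τ ε (Fin.last m) =
      descentIndicator (swap a.castSucc a.succ * τ) ε (Fin.last m) +
        if τ (Fin.last m).castSucc = a.succ ∧ ε (Fin.last m).castSucc = ε (Fin.last (m + 1))
        then 1 else 0 by
    rw [coloredDescents_eq_sum, coloredDescents_eq_sum, Fin.sum_univ_castSucc,
      Fin.sum_univ_castSucc, h_last]
    simp only [h_middle]
    omega
  simp only [descentIndicator, Fin.succ_last, Nat.succ_eq_add_one, Perm.mul_apply, hτ,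
    swap_apply_left]
  set p := τ (Fin.last m).castSucc
  have hp : p ≠ a.castSucc := h_ne _ (Fin.castSucc_lt_last _).ne
  by_cases hpa : p = a.succ
  · have hlt : a.castSucc < a.succ := Fin.castSucc_lt_succ
    simp only [hpa, swap_apply_right, hlt, hlt.not_gt, and_true, and_false, or_false, true_and,
      Fin.ext_iff]
    split_ifs <;> omega
  · have hlt : a.castSucc < p ↔ a.succ < p := by
      simp only [Ne, Fin.ext_iff, Fin.lt_def, Fin.val_castSucc, Fin.val_succ] at hp hpa ⊢
      omega
    simp only [swap_apply_of_ne_of_ne hp hpa, hlt, hpa, false_and, if_false, add_zero]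

def coloredPermsEndingAt (r n j : ℕ) (a : Fin (n + 1)) :
    Finset (Perm (Fin (n + 1)) × (Fin (n + 1) → Fin r)) :=
  univ.filter fun w => (w.2 0).val = 0 ∧ coloredDescents w.1 w.2 = j ∧
    (w.2 (Fin.last n)).val = 0 ∧ w.1 (Fin.last n) = a

lemma q_eq_card {n k j : ℕ} (a : Fin (n + 1)) (ha : a.val = n - k) :
    q r n k j = #(coloredPermsEndingAt r n j a) := by
  simp only [q, coloredPermsEndingAt, ← ha, Fin.val_inj]

def HasUncoloredPenultimate (b : Fin (m + 2))
    (w : Perm (Fin (m + 2)) × (Fin (m + 2) → Fin r)) : Prop :=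
  w.1 (Fin.last m).castSucc = b ∧ (w.2 (Fin.last m).castSucc).val = 0

instance (b : Fin (m + 2)) : DecidablePred (HasUncoloredPenultimate (r := r) b) :=
  fun _ => inferInstanceAs (Decidable (_ ∧ _))

def swapValues (a : Fin (m + 1)) :
    Perm (Perm (Fin (m + 2)) × (Fin (m + 2) → Fin r)) :=
  (Equiv.mulLeft (swap a.castSucc a.succ)).prodCongr (Equiv.refl _)

@[simp]
lemma swapValues_apply (a : Fin (m + 1)) (w : Perm (Fin (m + 2)) × (Fin (m + 2) → Fin r)) :
    swapValues a w = (swap a.castSucc a.succ * w.1, w.2) :=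
  rfl

lemma hasUncoloredPenultimate_swapValues (a : Fin (m + 1))
    (w : Perm (Fin (m + 2)) × (Fin (m + 2) → Fin r)) :
    HasUncoloredPenultimate a.castSucc (swapValues a w) ↔ HasUncoloredPenultimate a.succ w := by
  simp [HasUncoloredPenultimate, swap_apply_eq_iff]

lemma swapValues_mem_coloredPermsEndingAt_iff (a : Fin (m + 1)) (j : ℕ)
    (w : Perm (Fin (m + 2)) × (Fin (m + 2) → Fin r)) :
    swapValues a w ∈ coloredPermsEndingAt r (m + 1) j a.succ ↔
      w ∈ coloredPermsEndingAt r (m + 1)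
        (j + if HasUncoloredPenultimate a.succ w then 1 else 0) a.castSucc := by
  obtain ⟨τ, ε⟩ := w
  simp only [coloredPermsEndingAt, swapValues_apply, mem_filter, mem_univ, true_and,
    Perm.mul_apply, swap_apply_eq_iff, swap_apply_right]
  by_cases hτ : τ (Fin.last (m + 1)) = a.castSucc
  · have h_descents : ∀ hε : (ε (Fin.last (m + 1))).val = 0,
        coloredDescents τ ε = coloredDescents (swap a.castSucc a.succ * τ) ε +
          if HasUncoloredPenultimate a.succ (τ, ε) then 1 else 0 := fun hε => by
      simp only [coloredDescents_swap_mul a τ ε hτ, HasUncoloredPenultimate, Fin.ext_iff, hε]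
    constructor
    · rintro ⟨h0, hd, hε, -⟩
      exact ⟨h0, by rw [h_descents hε, hd], hε, hτ⟩
    · rintro ⟨h0, hd, hε, -⟩
      exact ⟨h0, by rw [h_descents hε] at hd; omega, hε, hτ⟩
  · simp only [hτ, and_false]

lemma card_filter_not_hasUncoloredPenultimate (a : Fin (m + 1)) (j : ℕ) :
    #((coloredPermsEndingAt r (m + 1) j a.castSucc).filter
        fun w => ¬HasUncoloredPenultimate a.succ w) =
      #((coloredPermsEndingAt r (m + 1) j a.succ).filter
        fun w => ¬HasUncoloredPenultimate a.castSucc w) :=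
  card_equiv (swapValues a) fun w => by
    rw [mem_filter, mem_filter, swapValues_mem_coloredPermsEndingAt_iff,
      hasUncoloredPenultimate_swapValues]
    by_cases h : HasUncoloredPenultimate a.succ w <;> simp [h]

lemma card_filter_hasUncoloredPenultimate_succ (a : Fin (m + 1)) (j : ℕ) :
    #((coloredPermsEndingAt r (m + 1) (j + 1) a.castSucc).filter
        (HasUncoloredPenultimate a.succ)) =
      #((coloredPermsEndingAt r (m + 1) j a.succ).filter
        (HasUncoloredPenultimate a.castSucc)) :=
  card_equiv (swapValues a) fun w => by
    rw [mem_filter, mem_filter, swapValues_mem_coloredPermsEndingAt_iff,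
      hasUncoloredPenultimate_swapValues]
    by_cases h : HasUncoloredPenultimate a.succ w <;> simp [h]

lemma filter_hasUncoloredPenultimate_zero (a : Fin (m + 1)) :
    (coloredPermsEndingAt r (m + 1) 0 a.castSucc).filter (HasUncoloredPenultimate a.succ) =
      ∅ := by
  refine filter_eq_empty_iff.2 fun ⟨τ, ε⟩ hw hp => ?_
  simp only [coloredPermsEndingAt, mem_filter, mem_univ, true_and] at hw
  obtain ⟨-, hd, hε, hτ⟩ := hw
  have := coloredDescents_swap_mul a τ ε hτ
  rw [if_pos ⟨hp.1, Fin.ext (hp.2.trans hε.symm)⟩] at this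
  omega

/-- The permutation with last value `b` whose other values are in the same relative order as
the values of `σ`. -/
def permSnoc (b : Fin (m + 2)) (σ : Perm (Fin (m + 1))) : Perm (Fin (m + 2)) :=
  (finSuccEquivLast.trans (optionCongr σ)).trans (finSuccEquiv' b).symm

/-- The standardization of `τ` with its last entry removed. -/
def permInit (τ : Perm (Fin (m + 2))) : Perm (Fin (m + 1)) :=
  removeNone ((finSuccEquivLast.symm.trans τ).trans (finSuccEquiv' (τ (Fin.last (m + 1)))))

@[simp]
lemma permSnoc_castSucc (b : Fin (m + 2)) (σ : Perm (Fin (m + 1))) (i : Fin (m + 1)) :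
    permSnoc b σ i.castSucc = b.succAbove (σ i) := by
  simp [permSnoc]

@[simp]
lemma permSnoc_last (b : Fin (m + 2)) (σ : Perm (Fin (m + 1))) :
    permSnoc b σ (Fin.last (m + 1)) = b := by
  simp [permSnoc]

lemma succAbove_permInit (τ : Perm (Fin (m + 2))) (i : Fin (m + 1)) :
    (τ (Fin.last (m + 1))).succAbove (permInit τ i) = τ i.castSucc := by
  have hne : τ i.castSucc ≠ τ (Fin.last (m + 1)) :=
    τ.injective.ne (Fin.castSucc_lt_last i).ne
  obtain ⟨y, hy⟩ := Fin.exists_succAbove_eq hne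
  have h_some : some (permInit τ i) = some y := by
    rw [permInit, removeNone_some _ ⟨y, ?_⟩] <;>
      simp [finSuccEquivLast, ← hy, finSuccEquiv'_succAbove]
  rw [Option.some_injective _ h_some, hy]

lemma permInit_permSnoc (b : Fin (m + 2)) (σ : Perm (Fin (m + 1))) :
    permInit (permSnoc b σ) = σ := by
  ext i : 1
  have := succAbove_permInit (permSnoc b σ) i
  rw [permSnoc_last, permSnoc_castSucc] at this
  exact Fin.succAbove_right_injective this

lemma permSnoc_permInit (τ : Perm (Fin (m + 2))) :
    permSnoc (τ (Fin.last (m + 1))) (permInit τ) = τ := by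
  ext x : 1
  induction x using Fin.lastCases with
  | last => rw [permSnoc_last]
  | cast i => rw [permSnoc_castSucc, succAbove_permInit]

lemma coloredDescents_permSnoc (b : Fin (m + 2)) (σ : Perm (Fin (m + 1)))
    (δ : Fin (m + 1) → Fin r) (hb : (σ (Fin.last m)).castSucc < b) :
    coloredDescents (permSnoc b σ) (Fin.snoc δ (δ (Fin.last m))) = coloredDescents σ δ := by
  have h_middle : ∀ i : Fin m,
      descentIndicator (permSnoc b σ) (Fin.snoc δ (δ (Fin.last m))) i.castSucc =
        descentIndicator σ δ i := fun i => by
    simp only [descentIndicator, Fin.succ_castSucc, Fin.snoc_castSucc, permSnoc_castSucc,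
      Fin.succAbove_lt_succAbove_iff]
  have h_last :
      descentIndicator (permSnoc b σ) (Fin.snoc δ (δ (Fin.last m))) (Fin.last m) = 0 := by
    simp only [descentIndicator, Fin.succ_last, Fin.snoc_castSucc, Fin.snoc_last,
      permSnoc_castSucc, permSnoc_last, lt_irrefl, true_and, false_or]
    rw [Fin.succAbove_of_castSucc_lt _ _ hb, if_neg hb.not_gt]
  rw [coloredDescents_eq_sum, coloredDescents_eq_sum, Fin.sum_univ_castSucc, h_last]
  simp only [h_middle, Fin.snoc_last, add_zero]

lemma card_filter_hasUncoloredPenultimate_castSucc (a : Fin (m + 1)) (j : ℕ) :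
    #((coloredPermsEndingAt r (m + 1) j a.succ).filter (HasUncoloredPenultimate a.castSucc)) =
      #(coloredPermsEndingAt r m j a) := by
  have h_lt : a.castSucc < a.succ := Fin.castSucc_lt_succ
  have h_restrict : ∀ w ∈ (coloredPermsEndingAt r (m + 1) j a.succ).filter
      (HasUncoloredPenultimate a.castSucc),
      permSnoc a.succ (permInit w.1) = w.1 ∧
        Fin.snoc (Fin.init w.2) (Fin.init w.2 (Fin.last m)) = w.2 ∧
        permInit w.1 (Fin.last m) = a := by
    rintro ⟨τ, ε⟩ hw
    simp only [coloredPermsEndingAt, HasUncoloredPenultimate, mem_filter, mem_univ, true_and] at hw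
    obtain ⟨⟨-, -, hε, hτ⟩, hp, hεp⟩ := hw
    refine ⟨hτ ▸ permSnoc_permInit τ, ?_, Fin.succAbove_right_injective (p := a.succ) ?_⟩
    · rw [show Fin.init ε (Fin.last m) = ε (Fin.last (m + 1)) from Fin.ext (hεp.trans hε.symm)]
      exact Fin.snoc_init_self ε
    · rw [← hτ, succAbove_permInit, hτ, hp, Fin.succAbove_succ_self]
  apply card_nbij' (fun w => (permInit w.1, Fin.init w.2))
    (fun w => (permSnoc a.succ w.1, Fin.snoc w.2 (w.2 (Fin.last m))))
  · rintro ⟨τ, ε⟩ hw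
    obtain ⟨hτ, hε, hσ⟩ := h_restrict _ hw
    simp only [coe_filter, coloredPermsEndingAt, HasUncoloredPenultimate, mem_filter, mem_univ,
      true_and, Set.mem_ofPred_eq] at hw ⊢
    obtain ⟨⟨h0, hd, -, -⟩, -, hεp⟩ := hw
    refine ⟨h0, ?_, hεp, hσ⟩
    rw [← hd, ← coloredDescents_permSnoc a.succ _ _ (hσ ▸ h_lt)]
    simp only at hτ hε
    rw [hτ, hε]
  · rintro ⟨σ, δ⟩ hw
    simp only [coloredPermsEndingAt, HasUncoloredPenultimate, mem_filter, mem_univ,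
      true_and, mem_coe] at hw ⊢
    obtain ⟨h0, hd, hδ, hσ⟩ := hw
    refine ⟨⟨?_, ?_, ?_, permSnoc_last _ _⟩, ?_, ?_⟩
    · rwa [← Fin.castSucc_zero, Fin.snoc_castSucc]
    · rw [coloredDescents_permSnoc _ _ _ (hσ ▸ h_lt), hd]
    · rwa [Fin.snoc_last]
    · rw [permSnoc_castSucc, hσ, Fin.succAbove_succ_self]
    · rwa [Fin.snoc_castSucc]
  · intro w hw
    obtain ⟨hτ, hε, -⟩ := h_restrict w hw
    exact Prod.ext hτ hε
  · intro w _
    exact Prod.ext (permInit_permSnoc _ _) (Fin.init_snoc (α := fun _ => Fin r) _ _)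

lemma card_coloredPermsEndingAt_castSucc_add (a : Fin (m + 1)) (j : ℕ) :
    #(coloredPermsEndingAt r (m + 1) j a.castSucc) + #(coloredPermsEndingAt r m j a) =
      #(coloredPermsEndingAt r (m + 1) j a.succ) +
        if j = 0 then 0 else #(coloredPermsEndingAt r m (j - 1) a) := by
  rw [← card_filter_add_card_filter_not (s := coloredPermsEndingAt r (m + 1) j a.castSucc)
      (HasUncoloredPenultimate a.succ),
    ← card_filter_add_card_filter_not (s := coloredPermsEndingAt r (m + 1) j a.succ)
      (HasUncoloredPenultimate a.castSucc),
    card_filter_not_hasUncoloredPenultimate, card_filter_hasUncoloredPenultimate_castSucc]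
  rcases j with _ | j
  · rw [filter_hasUncoloredPenultimate_zero, card_empty, if_pos rfl]
    ring
  · rw [card_filter_hasUncoloredPenultimate_succ, card_filter_hasUncoloredPenultimate_castSucc,
      if_neg j.succ_ne_zero, Nat.add_sub_cancel]
    ring

theorem stmt_15_general (r n k j : ℕ) (hn : 1 ≤ n) (hk : 1 ≤ k) (hkn : k ≤ n) :
    q r n k j + q r (n - 1) (k - 1) j
      = q r n (k - 1) j + (if j = 0 then 0 else q r (n - 1) (k - 1) (j - 1)) := by
  obtain ⟨m, rfl⟩ : ∃ m, n = m + 1 := ⟨n - 1, by omega⟩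
  obtain ⟨l, rfl⟩ : ∃ l, k = l + 1 := ⟨k - 1, by omega⟩
  let a : Fin (m + 1) := ⟨m - l, by omega⟩
  simp only [Nat.add_sub_cancel]
  rw [q_eq_card a.castSucc (by simp [a]), q_eq_card a.succ (by simp [a]; omega),
    q_eq_card a rfl, q_eq_card a rfl]
  exact card_coloredPermsEndingAt_castSucc_add a j

/-- The recurrence `q(n,k,j) = q(n,k-1,j) + q(n-1,k-1,j-1) - q(n-1,k-1,j)`, stated additively,
with the convention `q(n-1,k-1,-1) = 0` when `j = 0`. -/
theorem stmt_15 (r n k j : ℕ) (hr : 1 ≤ r) (hn : 1 ≤ n) (hk : 1 ≤ k) (hkn : k ≤ n)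
    (hj : j ≤ n) :
    q r n k j + q r (n - 1) (k - 1) j
      = q r n (k - 1) j + (if j = 0 then 0 else q r (n - 1) (k - 1) (j - 1)) :=
  stmt_15_general r n k j hn hk hkn
end
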